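/- arXiv:2508.18846 — 3 statements merged into one kernel-verified Lean document; each statement's English description precedes it below -/
import Mathlib

section
/- Suppose δ > 0 and let β_V be a super-Poincaré rate for μ_V and β_W a super-Poincaré rate for ν_W. Then the sticky-reflected Dirichlet form satisfies the super Poincaré inequality: for every r > 0 and every test function f, μ(f²) ≤ r·E_δ(f) + max( β_V(r)/θ , β_W(δr)/(1-θ) ) · μ(|f|)². -/
open MeasureTheory Real

noncomputable section

def Hs (d : ℕ) : Set (EuclideanSpace ℝ (Fin (d + 1))) := {x | 0 < x 0}

def iota (d : ℕ) (y : EuclideanSpace ℝ (Fin d)) : EuclideanSpace ℝ (Fin (d + 1)) :=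
  WithLp.toLp 2 (Fin.cons (0 : ℝ) (WithLp.ofLp y) : Fin (d + 1) → ℝ)

def IsTest (d : ℕ) (f : EuclideanSpace ℝ (Fin (d + 1)) → ℝ) : Prop :=
  ContDiff ℝ 1 f ∧ (∃ C, ∀ x, |f x| ≤ C) ∧ ∃ C, ∀ x, ‖gradient f x‖ ≤ C

def IsTestB (d : ℕ) (g : EuclideanSpace ℝ (Fin d) → ℝ) : Prop :=
  ContDiff ℝ 1 g ∧ (∃ C, ∀ y, |g y| ≤ C) ∧ ∃ C, ∀ y, ‖gradient g y‖ ≤ C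

def ZV (d : ℕ) (V : EuclideanSpace ℝ (Fin (d + 1)) → ℝ) : ℝ :=
  ∫ x in Hs d, Real.exp (V x)

def ZW (d : ℕ) (W : EuclideanSpace ℝ (Fin d) → ℝ) : ℝ :=
  ∫ y, Real.exp (W y)

/-- mean of `φ` under `μ_V`. -/
def muV (d : ℕ) (V : EuclideanSpace ℝ (Fin (d + 1)) → ℝ)
    (φ : EuclideanSpace ℝ (Fin (d + 1)) → ℝ) : ℝ :=
  (ZV d V)⁻¹ * ∫ x in Hs d, φ x * Real.exp (V x)

/-- mean of `ψ` under `ν_W`. -/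
def nuW (d : ℕ) (W : EuclideanSpace ℝ (Fin d) → ℝ)
    (ψ : EuclideanSpace ℝ (Fin d) → ℝ) : ℝ :=
  (ZW d W)⁻¹ * ∫ y, ψ y * Real.exp (W y)

def theta (d : ℕ) (V : EuclideanSpace ℝ (Fin (d + 1)) → ℝ)
    (W : EuclideanSpace ℝ (Fin d) → ℝ) (γ : ℝ) : ℝ :=
  γ * ZW d W / (γ * ZW d W + ZV d V)

/-- mean of `φ` under `μ = θ μ_V + (1-θ) μ_W^∂`. -/
def muM (d : ℕ) (V : EuclideanSpace ℝ (Fin (d + 1)) → ℝ)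
    (W : EuclideanSpace ℝ (Fin d) → ℝ) (γ : ℝ)
    (φ : EuclideanSpace ℝ (Fin (d + 1)) → ℝ) : ℝ :=
  theta d V W γ * muV d V φ + (1 - theta d V W γ) * nuW d W (fun y => φ (iota d y))

def gV (d : ℕ) (V f : EuclideanSpace ℝ (Fin (d + 1)) → ℝ) : ℝ :=
  muV d V (fun x => ‖gradient f x‖ ^ 2)

def gW (d : ℕ) (W : EuclideanSpace ℝ (Fin d) → ℝ)
    (f : EuclideanSpace ℝ (Fin (d + 1)) → ℝ) : ℝ :=
  nuW d W (fun y => ‖gradient (fun z => f (iota d z)) y‖ ^ 2)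

def Edir (d : ℕ) (V : EuclideanSpace ℝ (Fin (d + 1)) → ℝ)
    (W : EuclideanSpace ℝ (Fin d) → ℝ) (γ δ : ℝ)
    (f : EuclideanSpace ℝ (Fin (d + 1)) → ℝ) : ℝ :=
  theta d V W γ * gV d V f + (1 - theta d V W γ) * δ * gW d W f

def supNorm (d : ℕ) (f : EuclideanSpace ℝ (Fin (d + 1)) → ℝ) : ℝ := ⨆ x, |f x|

def lap (d : ℕ) (h : EuclideanSpace ℝ (Fin (d + 1)) → ℝ)
    (x : EuclideanSpace ℝ (Fin (d + 1))) : ℝ :=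
  ∑ i : Fin (d + 1),
    fderiv ℝ (fun z => fderiv ℝ h z (EuclideanSpace.single i 1)) x (EuclideanSpace.single i 1)

def LV (d : ℕ) (V h : EuclideanSpace ℝ (Fin (d + 1)) → ℝ)
    (x : EuclideanSpace ℝ (Fin (d + 1))) : ℝ :=
  lap d h x + (inner ℝ (gradient V x) (gradient h x) : ℝ)

def M0 (d : ℕ) (V : EuclideanSpace ℝ (Fin (d + 1)) → ℝ)
    (W : EuclideanSpace ℝ (Fin d) → ℝ) : ℝ :=
  ⨆ y, max (W y - V (iota d y)) 0

def C0 (d : ℕ) (V : EuclideanSpace ℝ (Fin (d + 1)) → ℝ)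
    (W : EuclideanSpace ℝ (Fin d) → ℝ) : ℝ :=
  (ZV d V / ZW d W) * Real.exp (M0 d V W)

def C1 (d : ℕ) (V h : EuclideanSpace ℝ (Fin (d + 1)) → ℝ) : ℝ :=
  Real.sqrt (muV d V (fun x => (max (-(LV d V h x)) 0) ^ 2))

def C2 (d : ℕ) (V h : EuclideanSpace ℝ (Fin (d + 1)) → ℝ) : ℝ :=
  Real.sqrt (muV d V (fun x => ‖gradient h x‖ ^ 2))

/-- Assumption (A). -/
def AssumptionA (d : ℕ) (V : EuclideanSpace ℝ (Fin (d + 1)) → ℝ)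
    (W : EuclideanSpace ℝ (Fin d) → ℝ) (h : EuclideanSpace ℝ (Fin (d + 1)) → ℝ) : Prop :=
  ContDiff ℝ 2 h ∧
  (∀ y, fderiv ℝ h (iota d y) (EuclideanSpace.single 0 1) = 1) ∧
  BddAbove (Set.range fun y => max (W y - V (iota d y)) 0) ∧
  IntegrableOn (fun x => (max (-(LV d V h x)) 0) ^ 2 * Real.exp (V x)) (Hs d) ∧
  IntegrableOn (fun x => ‖gradient h x‖ ^ 2 * Real.exp (V x)) (Hs d) ∧
  ∀ φ : EuclideanSpace ℝ (Fin (d + 1)) → ℝ, (∃ K, LipschitzWith K φ) →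
    (∃ C, ∀ x, |φ x| ≤ C) →
    (∫ y, φ (iota d y) * Real.exp (V (iota d y))) =
      - ∫ x in Hs d,
          (φ x * LV d V h x + (inner ℝ (gradient φ x) (gradient h x) : ℝ)) * Real.exp (V x)

/-- Assumption (B) with given sup constants. -/
def AssumptionB (d : ℕ) (V : EuclideanSpace ℝ (Fin (d + 1)) → ℝ)
    (W : EuclideanSpace ℝ (Fin d) → ℝ) (h : EuclideanSpace ℝ (Fin (d + 1)) → ℝ)
    (Cb1 Cb2 : ℝ) : Prop :=
  ContDiff ℝ 2 h ∧
  (∀ y, fderiv ℝ h (iota d y) (EuclideanSpace.single 0 1) = 1) ∧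
  BddAbove (Set.range fun y => max (W y - V (iota d y)) 0) ∧
  IsLUB ((fun x => max (-(LV d V h x)) 0) '' {x : EuclideanSpace ℝ (Fin (d + 1)) | 0 ≤ x 0}) Cb1 ∧
  IsLUB ((fun x => ‖gradient h x‖) '' {x : EuclideanSpace ℝ (Fin (d + 1)) | 0 ≤ x 0}) Cb2 ∧
  ∀ φ : EuclideanSpace ℝ (Fin (d + 1)) → ℝ, (∃ K, LipschitzWith K φ) →
    (∃ C, ∀ x, |φ x| ≤ C) →
    (∫ y, φ (iota d y) * Real.exp (V (iota d y))) =
      - ∫ x in Hs d,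
          (φ x * LV d V h x + (inner ℝ (gradient φ x) (gradient h x) : ℝ)) * Real.exp (V x)


/-!
`μ` is the `θ`-mixture of `μ_V` and `μ_W^∂`, and the boundary part only sees the trace `f ∘ ι`,
a test function on `ℝ^d` with `|∇(f ∘ ι)| ≤ |∇f| ∘ ι`. The two super-Poincaré inequalities, at
`r` for `μ_V` and at `δ r` for `ν_W`, mix to `μ(f²) ≤ r E_δ(f) + θ β_V(r) a² + (1-θ) β_W(δ r) b²`
with `a = μ_V(|f|)`, `b = ν_W(|f ∘ ι|)`; since `a, b ≥ 0`, the last two terms are at most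
`max (β_V(r)/θ) (β_W(δ r)/(1-θ)) (θ a + (1-θ) b)²`, and `θ a + (1-θ) b = μ(|f|)`.
-/

theorem weighted_sum_sq_le_max_div_mul_sq {s t βa βb a b : ℝ} (hs : 0 < s) (ht : 0 < t)
    (hβa : 0 ≤ βa) (ha : 0 ≤ a) (hb : 0 ≤ b) :
    s * (βa * a ^ 2) + t * (βb * b ^ 2) ≤ max (βa / s) (βb / t) * (s * a + t * b) ^ 2 := by
  set M := max (βa / s) (βb / t)
  have hMa : βa ≤ M * s := (div_le_iff₀ hs).mp (le_max_left _ _)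
  have hMb : βb ≤ M * t := (div_le_iff₀ ht).mp (le_max_right _ _)
  have hM : 0 ≤ M := (div_nonneg hβa hs.le).trans (le_max_left _ _)
  nlinarith [mul_le_mul_of_nonneg_right hMa (mul_nonneg hs.le (sq_nonneg a)),
    mul_le_mul_of_nonneg_right hMb (mul_nonneg ht.le (sq_nonneg b)),
    mul_nonneg (mul_nonneg hM (mul_nonneg hs.le ht.le)) (mul_nonneg ha hb)]

theorem LinearIsometry.norm_gradient_comp_le {E F : Type*} [NormedAddCommGroup E]
    [InnerProductSpace ℝ E] [CompleteSpace E] [NormedAddCommGroup F] [InnerProductSpace ℝ F]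
    [CompleteSpace F] (L : E →ₗᵢ[ℝ] F) {f : F → ℝ} {y : E} (hf : DifferentiableAt ℝ f (L y)) :
    ‖gradient (f ∘ L) y‖ ≤ ‖gradient f (L y)‖ := by
  have hcomp : fderiv ℝ (f ∘ L) y = (fderiv ℝ f (L y)).comp L.toContinuousLinearMap :=
    (hf.hasFDerivAt.comp y L.toContinuousLinearMap.hasFDerivAt).fderiv
  simp only [gradient, LinearIsometryEquiv.norm_map, hcomp]
  calc ‖(fderiv ℝ f (L y)).comp L.toContinuousLinearMap‖
      ≤ ‖fderiv ℝ f (L y)‖ * ‖L.toContinuousLinearMap‖ := ContinuousLinearMap.opNorm_comp_le _ _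
    _ ≤ ‖fderiv ℝ f (L y)‖ := mul_le_of_le_one_right (norm_nonneg _) L.norm_toContinuousLinearMap_le

def iotaₗᵢ (d : ℕ) : EuclideanSpace ℝ (Fin d) →ₗᵢ[ℝ] EuclideanSpace ℝ (Fin (d + 1)) where
  toFun := iota d
  map_add' y z := by
    ext i
    refine Fin.cases ?_ (fun j => ?_) i <;> simp [iota]
  map_smul' c y := by
    ext i
    refine Fin.cases ?_ (fun j => ?_) i <;> simp [iota]
  norm_map' y := by
    simp [EuclideanSpace.norm_eq, Fin.sum_univ_succ, iota]

theorem IsTest.comp_iota {d : ℕ} {f : EuclideanSpace ℝ (Fin (d + 1)) → ℝ} (hf : IsTest d f) :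
    IsTestB d (fun y => f (iota d y)) := by
  obtain ⟨hf1, ⟨C, hC⟩, ⟨C', hC'⟩⟩ := hf
  have hcomp : (fun y => f (iota d y)) = f ∘ iotaₗᵢ d := rfl
  refine ⟨?_, ⟨C, fun y => hC _⟩, ⟨C', fun y => ?_⟩⟩
  · rw [hcomp]
    exact hf1.comp (iotaₗᵢ d).toContinuousLinearMap.contDiff
  · rw [hcomp]
    exact ((iotaₗᵢ d).norm_gradient_comp_le (hf1.differentiable one_ne_zero _)).trans (hC' _)

theorem ZV_pos {d : ℕ} {V : EuclideanSpace ℝ (Fin (d + 1)) → ℝ}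
    (hZV : IntegrableOn (fun x => Real.exp (V x)) (Hs d)) : 0 < ZV d V := by
  have hHs : IsOpen (Hs d) := isOpen_lt continuous_const (EuclideanSpace.proj 0).continuous
  have : NeZero (volume.restrict (Hs d)) := ⟨by
    rw [Ne, Measure.restrict_eq_zero]
    exact (hHs.measure_pos volume ⟨EuclideanSpace.single 0 1, by simp [Hs]⟩).ne'⟩
  exact integral_exp_pos hZV

theorem theta_mem_Ioo {d : ℕ} {V : EuclideanSpace ℝ (Fin (d + 1)) → ℝ}
    {W : EuclideanSpace ℝ (Fin d) → ℝ} {γ : ℝ}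
    (hZV : IntegrableOn (fun x => Real.exp (V x)) (Hs d))
    (hZW : Integrable fun y => Real.exp (W y)) (hγ : 0 < γ) :
    theta d V W γ ∈ Set.Ioo 0 1 := by
  have hZV := ZV_pos hZV
  have hZW : 0 < ZW d W := integral_exp_pos hZW
  exact ⟨by unfold theta; positivity, by unfold theta; rw [div_lt_one (by positivity)]; linarith⟩

theorem muV_nonneg {d : ℕ} (V : EuclideanSpace ℝ (Fin (d + 1)) → ℝ)
    {φ : EuclideanSpace ℝ (Fin (d + 1)) → ℝ} (hφ : ∀ x, 0 ≤ φ x) : 0 ≤ muV d V φ :=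
  mul_nonneg (inv_nonneg.mpr (integral_nonneg fun _ => (Real.exp_pos _).le))
    (integral_nonneg fun x => mul_nonneg (hφ x) (Real.exp_pos _).le)

theorem nuW_nonneg {d : ℕ} (W : EuclideanSpace ℝ (Fin d) → ℝ)
    {ψ : EuclideanSpace ℝ (Fin d) → ℝ} (hψ : ∀ y, 0 ≤ ψ y) : 0 ≤ nuW d W ψ :=
  mul_nonneg (inv_nonneg.mpr (integral_nonneg fun _ => (Real.exp_pos _).le))
    (integral_nonneg fun y => mul_nonneg (hψ y) (Real.exp_pos _).le)

theorem sticky_super_poincare_boundary_diffusion_general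
    (d : ℕ)
    (V : EuclideanSpace ℝ (Fin (d + 1)) → ℝ) (W : EuclideanSpace ℝ (Fin d) → ℝ)
    (hZV : IntegrableOn (fun x => Real.exp (V x)) (Hs d))
    (hZW : Integrable fun y => Real.exp (W y))
    (γ : ℝ) (hγ : 0 < γ) (δ : ℝ) (hδ : 0 < δ)
    (βV βW : ℝ → ℝ) (hβVpos : ∀ r, 0 < r → 0 < βV r)
    (hβV : ∀ r, 0 < r → ∀ f, IsTest d f →
      muV d V (fun x => f x ^ 2) ≤ r * gV d V f + βV r * muV d V (fun x => |f x|) ^ 2)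
    (hβW : ∀ r, 0 < r → ∀ g, IsTestB d g →
      nuW d W (fun y => g y ^ 2) ≤ r * nuW d W (fun y => ‖gradient g y‖ ^ 2)
        + βW r * nuW d W (fun y => |g y|) ^ 2) :
    ∀ r, 0 < r → ∀ f, IsTest d f →
      muM d V W γ (fun x => f x ^ 2) ≤ r * Edir d V W γ δ f
        + max (βV r / theta d V W γ) (βW (δ * r) / (1 - theta d V W γ))
          * muM d V W γ (fun x => |f x|) ^ 2 := by
  intro r hr f hf
  obtain ⟨hθ0, hθ1⟩ := theta_mem_Ioo hZV hZW hγ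
  have hbulk := mul_le_mul_of_nonneg_left (hβV r hr f hf) hθ0.le
  have hboundary := mul_le_mul_of_nonneg_left
    (hβW (δ * r) (by positivity) _ hf.comp_iota) (sub_pos.mpr hθ1).le
  have hmix := weighted_sum_sq_le_max_div_mul_sq (βb := βW (δ * r)) hθ0 (sub_pos.mpr hθ1)
    (hβVpos r hr).le (muV_nonneg V fun x => abs_nonneg (f x))
    (nuW_nonneg W fun y => abs_nonneg (f (iota d y)))
  unfold muM Edir gW
  linarith

/-- super Poincaré inequality for the sticky-reflected Dirichlet form
with boundary diffusion (`δ > 0`). -/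
theorem sticky_super_poincare_boundary_diffusion
    (d : ℕ) (hd : 1 ≤ d)
    (V : EuclideanSpace ℝ (Fin (d + 1)) → ℝ) (W : EuclideanSpace ℝ (Fin d) → ℝ)
    (hV : ContDiff ℝ 1 V) (hW : Continuous W)
    (hZV : IntegrableOn (fun x => Real.exp (V x)) (Hs d))
    (hZW : Integrable fun y => Real.exp (W y))
    (γ : ℝ) (hγ : 0 < γ) (δ : ℝ) (hδ : 0 < δ)
    (βV βW : ℝ → ℝ) (hβVpos : ∀ r, 0 < r → 0 < βV r) (hβWpos : ∀ r, 0 < r → 0 < βW r)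
    (hβV : ∀ r, 0 < r → ∀ f, IsTest d f →
      muV d V (fun x => f x ^ 2) ≤ r * gV d V f + βV r * muV d V (fun x => |f x|) ^ 2)
    (hβW : ∀ r, 0 < r → ∀ g, IsTestB d g →
      nuW d W (fun y => g y ^ 2) ≤ r * nuW d W (fun y => ‖gradient g y‖ ^ 2)
        + βW r * nuW d W (fun y => |g y|) ^ 2) :
    ∀ r, 0 < r → ∀ f, IsTest d f →
      muM d V W γ (fun x => f x ^ 2) ≤ r * Edir d V W γ δ f
        + max (βV r / theta d V W γ) (βW (δ * r) / (1 - theta d V W γ))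
          * muM d V W γ (fun x => |f x|) ^ 2 :=
  sticky_super_poincare_boundary_diffusion_general d V W hZV hZW γ hγ δ hδ βV βW hβVpos hβV hβW
end
end

section
/- Let f : X → ℝ be measurable with f² integrable with respect to both μ₁ and μ₂, let r > 0 and let a, b ≥ 0 and β₁, β₂ > 0 satisfy μ₁(f²) ≤ r·a + β₁·μ₁(|f|)² and μ₂(f²) ≤ r·b + β₂·μ₂(|f|)². Then μ(f²) ≤ r·(θa + (1-θ)b) + max( β₁/θ , β₂/(1-θ) )·μ(|f|)². -/
/-!
Integrals against the mixture `θ μ₁ + (1 - θ) μ₂` are the convex combinations of the integrals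
against `μ₁` and `μ₂`, so the two bounds average to the claimed one once
`θ β₁ A² + (1 - θ) β₂ B² ≤ M (θ A + (1 - θ) B)²` with `M = max (β₁ / θ) (β₂ / (1 - θ))`.
This holds because `θ β₁ ≤ M θ²` and `(1 - θ) β₂ ≤ M (1 - θ)²`, and the cross term
`2 M θ (1 - θ) A B` of the square is nonnegative.
-/

open MeasureTheory

lemma mul_sq_add_mul_sq_le_mul_add_sq {s t β₁ β₂ M A B : ℝ} (hs : 0 ≤ s) (ht : 0 ≤ t)
    (hA : 0 ≤ A) (hB : 0 ≤ B) (hM : 0 ≤ M) (h₁ : β₁ ≤ M * s) (h₂ : β₂ ≤ M * t) :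
    s * β₁ * A ^ 2 + t * β₂ * B ^ 2 ≤ M * (s * A + t * B) ^ 2 := by
  have hsA : s * β₁ * A ^ 2 ≤ M * (s * A) ^ 2 := by
    calc s * β₁ * A ^ 2 ≤ s * (M * s) * A ^ 2 := by gcongr
      _ = M * (s * A) ^ 2 := by ring
  have htB : t * β₂ * B ^ 2 ≤ M * (t * B) ^ 2 := by
    calc t * β₂ * B ^ 2 ≤ t * (M * t) * B ^ 2 := by gcongr
      _ = M * (t * B) ^ 2 := by ring
  have hcross : 0 ≤ M * (2 * (s * A) * (t * B)) := by positivity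
  linarith

lemma mul_sq_add_mul_sq_le_max_div_mul_add_sq {s t β₁ β₂ A B : ℝ} (hs : 0 < s) (ht : 0 < t)
    (hβ₁ : 0 ≤ β₁) (hA : 0 ≤ A) (hB : 0 ≤ B) :
    s * β₁ * A ^ 2 + t * β₂ * B ^ 2 ≤ max (β₁ / s) (β₂ / t) * (s * A + t * B) ^ 2 :=
  mul_sq_add_mul_sq_le_mul_add_sq hs.le ht.le hA hB
    ((div_nonneg hβ₁ hs.le).trans (le_max_left _ _))
    ((div_le_iff₀ hs).mp (le_max_left _ _)) ((div_le_iff₀ ht).mp (le_max_right _ _))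

namespace MeasureTheory

variable {X : Type*} [MeasurableSpace X] {μ₁ μ₂ : Measure X}

lemma integral_ofReal_smul_add_ofReal_smul {g : X → ℝ} (hg₁ : Integrable g μ₁)
    (hg₂ : Integrable g μ₂) {s t : ℝ} (hs : 0 ≤ s) (ht : 0 ≤ t) :
    ∫ x, g x ∂(ENNReal.ofReal s • μ₁ + ENNReal.ofReal t • μ₂) =
      s * ∫ x, g x ∂μ₁ + t * ∫ x, g x ∂μ₂ := by
  rw [integral_add_measure (hg₁.smul_measure ENNReal.ofReal_ne_top)
      (hg₂.smul_measure ENNReal.ofReal_ne_top), integral_smul_measure, integral_smul_measure,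
    ENNReal.toReal_ofReal hs, ENNReal.toReal_ofReal ht, smul_eq_mul, smul_eq_mul]

lemma Integrable.abs_of_sq [IsFiniteMeasure μ₁] {f : X → ℝ}
    (hf : AEStronglyMeasurable f μ₁) (h : Integrable (fun x => f x ^ 2) μ₁) :
    Integrable (fun x => |f x|) μ₁ :=
  (((memLp_two_iff_integrable_sq hf).mpr h).integrable one_le_two).abs

end MeasureTheory

theorem super_poincare_convex_combination_general
    {X : Type*} [MeasurableSpace X] (μ₁ μ₂ : Measure X)
    [IsProbabilityMeasure μ₁] [IsProbabilityMeasure μ₂]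
    (θ : ℝ) (hθ : θ ∈ Set.Ioo (0 : ℝ) 1)
    (f : X → ℝ) (hf : Measurable f)
    (h1 : Integrable (fun x => f x ^ 2) μ₁) (h2 : Integrable (fun x => f x ^ 2) μ₂)
    (r a b β₁ β₂ : ℝ)
    (hβ₁ : 0 < β₁)
    (H1 : ∫ x, f x ^ 2 ∂μ₁ ≤ r * a + β₁ * (∫ x, |f x| ∂μ₁) ^ 2)
    (H2 : ∫ x, f x ^ 2 ∂μ₂ ≤ r * b + β₂ * (∫ x, |f x| ∂μ₂) ^ 2) :
    ∫ x, f x ^ 2 ∂(ENNReal.ofReal θ • μ₁ + ENNReal.ofReal (1 - θ) • μ₂) ≤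
      r * (θ * a + (1 - θ) * b)
        + max (β₁ / θ) (β₂ / (1 - θ))
          * (∫ x, |f x| ∂(ENNReal.ofReal θ • μ₁ + ENNReal.ofReal (1 - θ) • μ₂)) ^ 2 := by
  obtain ⟨hθ₀, hθ₁⟩ := hθ
  have hθ₁' : 0 < 1 - θ := sub_pos.mpr hθ₁
  rw [integral_ofReal_smul_add_ofReal_smul h1 h2 hθ₀.le hθ₁'.le,
    integral_ofReal_smul_add_ofReal_smul (h1.abs_of_sq hf.aestronglyMeasurable)
      (h2.abs_of_sq hf.aestronglyMeasurable) hθ₀.le hθ₁'.le]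
  have hmix := mul_sq_add_mul_sq_le_max_div_mul_add_sq (β₂ := β₂) hθ₀ hθ₁' hβ₁.le
    (integral_nonneg (μ := μ₁) fun x => abs_nonneg (f x))
    (integral_nonneg (μ := μ₂) fun x => abs_nonneg (f x))
  linarith [mul_le_mul_of_nonneg_left H1 hθ₀.le, mul_le_mul_of_nonneg_left H2 hθ₁'.le]

/-- combining super Poincaré bounds under a convex combination of
probability measures. -/
theorem super_poincare_convex_combination
    {X : Type*} [MeasurableSpace X] (μ₁ μ₂ : Measure X)
    [IsProbabilityMeasure μ₁] [IsProbabilityMeasure μ₂]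
    (θ : ℝ) (hθ : θ ∈ Set.Ioo (0 : ℝ) 1)
    (f : X → ℝ) (hf : Measurable f)
    (h1 : Integrable (fun x => f x ^ 2) μ₁) (h2 : Integrable (fun x => f x ^ 2) μ₂)
    (r a b β₁ β₂ : ℝ) (hr : 0 < r) (ha : 0 ≤ a) (hb : 0 ≤ b)
    (hβ₁ : 0 < β₁) (hβ₂ : 0 < β₂)
    (H1 : ∫ x, f x ^ 2 ∂μ₁ ≤ r * a + β₁ * (∫ x, |f x| ∂μ₁) ^ 2)
    (H2 : ∫ x, f x ^ 2 ∂μ₂ ≤ r * b + β₂ * (∫ x, |f x| ∂μ₂) ^ 2) :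
    ∫ x, f x ^ 2 ∂(ENNReal.ofReal θ • μ₁ + ENNReal.ofReal (1 - θ) • μ₂) ≤
      r * (θ * a + (1 - θ) * b)
        + max (β₁ / θ) (β₂ / (1 - θ))
          * (∫ x, |f x| ∂(ENNReal.ofReal θ • μ₁ + ENNReal.ofReal (1 - θ) • μ₂)) ^ 2 :=
  super_poincare_convex_combination_general μ₁ μ₂ θ hθ f hf h1 h2 r a b β₁ β₂ hβ₁ H1 H2
end

section
/- There exists a constant c > 0 such that for every r > 0 and every continuously differentiable function f : ℝ → ℝ, (1/2)·∫₀¹ f(s)² ds + (1/4)·f(0)² + (1/4)·f(1)² ≤ (r/2)·∫₀¹ f'(s)² ds + c·( min(1,r) )^{-1/2} · ( (1/2)·∫₀¹ |f(s)| ds + (1/4)·|f(0)| + (1/4)·|f(1)| )². -/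
/-!
Write `μ` for `stickyMean`. For `x ∈ [0,1]` pick a window `[c, c + h] ∋ x` inside `[0,1]`;
averaging `|f x| ≤ |f y| + ∫ |f'|` over the window and using `|f'| ≤ t f'² / 2 + 1 / (2t)` gives
`sup |f| ≤ 2 μ(|f|) / h + (t/2) ∫ f'² + h / (2t)`. Since `μ(f²) ≤ sup |f| · μ(|f|)`, the choice
`t = r / μ(|f|)` turns the derivative term into `(r/2) ∫ f'²` at the price of `h μ(|f|)² / (2r)`,
and `h = √(1 ∧ r)` makes both `2/h` and `h/(2r)` at most a multiple of `(1 ∧ r)^{-1/2}`.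
-/

open MeasureTheory intervalIntegral
open Set
open scoped Interval

theorem abs_sub_le_integral_abs_deriv {f : ℝ → ℝ} (hf : ContDiff ℝ 1 f) {a b x y : ℝ}
    (hx : x ∈ Icc a b) (hy : y ∈ Icc a b) :
    |f x - f y| ≤ ∫ s in a..b, |deriv f s| := by
  have hd : Continuous (deriv f) := hf.continuous_deriv le_rfl
  rw [← integral_deriv_eq_sub (fun t _ => (hf.differentiable one_ne_zero).differentiableAt)
    (hd.intervalIntegrable y x), integral_of_le (hx.1.trans hx.2)]
  calc |∫ s in y..x, deriv f s| ≤ ∫ s in Ι y x, |deriv f s| := by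
        simpa only [Real.norm_eq_abs] using
          norm_integral_le_integral_norm_uIoc (f := deriv f) (μ := volume)
    _ ≤ ∫ s in Ioc a b, |deriv f s| :=
      setIntegral_mono_set (hd.abs.integrableOn_Icc.mono_set Ioc_subset_Icc_self)
        (Filter.Eventually.of_forall fun s => abs_nonneg _)
        (Filter.Eventually.of_forall (Ioc_subset_Ioc (le_min hy.1 hx.1) (max_le hy.2 hx.2)))

theorem abs_le_integral_abs_div_add_integral_abs_deriv {f : ℝ → ℝ} (hf : ContDiff ℝ 1 f)
    {a b x : ℝ} (hab : a < b) (hx : x ∈ Icc a b) :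
    |f x| ≤ (∫ s in a..b, |f s|) / (b - a) + ∫ s in a..b, |deriv f s| := by
  set D := ∫ s in a..b, |deriv f s|
  have key : ∫ _ in a..b, (|f x| - D) ≤ ∫ y in a..b, |f y| :=
    integral_mono_on hab.le intervalIntegrable_const (hf.continuous.abs.intervalIntegrable a b)
      fun y hy => by
        linarith [abs_sub_abs_le_abs_sub (f x) (f y), abs_sub_le_integral_abs_deriv hf hx hy]
  rw [intervalIntegral.integral_const, smul_eq_mul] at key
  rw [← sub_le_iff_le_add, le_div_iff₀ (sub_pos.2 hab)]
  linarith

theorem integral_abs_le_mul_integral_sq_add {g : ℝ → ℝ} (hg : Continuous g) {a b t : ℝ}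
    (hab : a ≤ b) (ht : 0 < t) :
    ∫ s in a..b, |g s| ≤ t / 2 * (∫ s in a..b, g s ^ 2) + (b - a) / (2 * t) := by
  have key : ∫ s in a..b, |g s| ≤ ∫ s in a..b, (t / 2 * g s ^ 2 + 1 / (2 * t)) := by
    refine integral_mono_on hab (hg.abs.intervalIntegrable a b)
      ((continuous_const.mul (hg.pow 2)).add continuous_const |>.intervalIntegrable a b)
      fun s _ => ?_
    rw [← sq_abs (g s)]
    have : 0 ≤ (t * |g s| - 1) ^ 2 / (2 * t) := by positivity
    field_simp at this ⊢
    nlinarith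
  rw [intervalIntegral.integral_add (f := fun s => t / 2 * g s ^ 2)
    ((continuous_const.mul (hg.pow 2)).intervalIntegrable a b)
    intervalIntegrable_const, intervalIntegral.integral_const_mul, intervalIntegral.integral_const,
    smul_eq_mul, mul_one_div] at key
  exact key

theorem exists_Icc_add_subset_Icc_of_mem {a b x h : ℝ} (hx : x ∈ Icc a b) (hh₀ : 0 ≤ h)
    (hh : h ≤ b - a) : ∃ c, a ≤ c ∧ c + h ≤ b ∧ x ∈ Icc c (c + h) :=
  ⟨min x (b - h), le_min hx.1 (by linarith), by linarith [min_le_right x (b - h)],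
    min_le_left _ _, by rcases min_choice x (b - h) with hc | hc <;> rw [hc] <;> linarith [hx.2]⟩

theorem abs_le_integral_abs_div_add_integral_deriv_sq {f : ℝ → ℝ} (hf : ContDiff ℝ 1 f)
    {a b h t x : ℝ} (hx : x ∈ Icc a b) (hh₀ : 0 < h) (hh : h ≤ b - a) (ht : 0 < t) :
    |f x| ≤ (∫ s in a..b, |f s|) / h + t / 2 * (∫ s in a..b, deriv f s ^ 2) + h / (2 * t) := by
  obtain ⟨c, hac, hcb, hxc⟩ := exists_Icc_add_subset_Icc_of_mem hx hh₀.le hh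
  have hd : Continuous (deriv f) := hf.continuous_deriv le_rfl
  have hc : c ≤ c + h := by linarith
  have hmono {g : ℝ → ℝ} (hg : Continuous g) (hg₀ : ∀ s, 0 ≤ g s) :
      ∫ s in c..c + h, g s ≤ ∫ s in a..b, g s :=
    integral_mono_interval hac hc hcb (Filter.Eventually.of_forall hg₀) (hg.intervalIntegrable a b)
  calc |f x| ≤ (∫ s in c..c + h, |f s|) / (c + h - c) + ∫ s in c..c + h, |deriv f s| :=
        abs_le_integral_abs_div_add_integral_abs_deriv hf (by linarith) hxc
    _ ≤ (∫ s in c..c + h, |f s|) / h + t / 2 * (∫ s in c..c + h, deriv f s ^ 2) + h / (2 * t) := by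
        have := integral_abs_le_mul_integral_sq_add hd hc ht
        rw [add_sub_cancel_left] at this ⊢
        linarith
    _ ≤ _ := by
        have := hmono hf.continuous.abs fun s => abs_nonneg _
        have := hmono (g := fun s => deriv f s ^ 2) (hd.pow 2) fun s => sq_nonneg _
        gcongr

noncomputable def stickyMean (f : ℝ → ℝ) : ℝ :=
  1 / 2 * (∫ s in (0 : ℝ)..1, f s) + 1 / 4 * f 0 + 1 / 4 * f 1

theorem stickyMean_sq_le_mul {f : ℝ → ℝ} (hf : Continuous f) {M : ℝ}
    (hM : ∀ x ∈ Icc (0 : ℝ) 1, |f x| ≤ M) :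
    stickyMean (fun s => f s ^ 2) ≤ M * stickyMean (fun s => |f s|) := by
  have hpt (x) (hx : x ∈ Icc (0 : ℝ) 1) : f x ^ 2 ≤ M * |f x| := by
    rw [← sq_abs, sq]
    exact mul_le_mul_of_nonneg_right (hM x hx) (abs_nonneg _)
  have hbulk : ∫ s in (0 : ℝ)..1, f s ^ 2 ≤ M * ∫ s in (0 : ℝ)..1, |f s| := by
    rw [← intervalIntegral.integral_const_mul]
    exact integral_mono_on zero_le_one ((hf.pow 2).intervalIntegrable 0 1)
      ((continuous_const.mul hf.abs).intervalIntegrable 0 1) hpt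
  unfold stickyMean
  linarith [hpt 0 (left_mem_Icc.2 zero_le_one), hpt 1 (right_mem_Icc.2 zero_le_one)]

/-- Example 4.1(b), super Poincaré inequality for the sticky-reflected
Brownian motion on `[0,1]` (with `δ = 0`, `γ = 1/2`, `V = W = 0`). -/
theorem sticky_super_poincare_unit_interval :
    ∃ c : ℝ, 0 < c ∧ ∀ r : ℝ, 0 < r → ∀ f : ℝ → ℝ, ContDiff ℝ 1 f →
      (1 / 2) * (∫ s in (0 : ℝ)..1, f s ^ 2) + (1 / 4) * f 0 ^ 2 + (1 / 4) * f 1 ^ 2 ≤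
        (r / 2) * (∫ s in (0 : ℝ)..1, deriv f s ^ 2)
          + c * min 1 r ^ (-(1 / 2) : ℝ)
            * ((1 / 2) * (∫ s in (0 : ℝ)..1, |f s|)
              + (1 / 4) * |f 0| + (1 / 4) * |f 1|) ^ 2 := by
  refine ⟨5 / 2, by norm_num, fun r hr f hf => ?_⟩
  have hm₀ : 0 < min 1 r := lt_min one_pos hr
  rw [Real.rpow_neg hm₀.le, ← Real.sqrt_eq_rpow]
  set h := √(min 1 r)
  have hh₀ : 0 < h := Real.sqrt_pos.2 hm₀
  have hh₁ : h ≤ 1 := Real.sqrt_le_one.2 (min_le_left _ _)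
  have hhr : h / r ≤ h⁻¹ := by
    rw [div_le_iff₀ hr, inv_mul_eq_div, le_div_iff₀ hh₀, Real.mul_self_sqrt hm₀.le]
    exact min_le_right _ _
  change stickyMean (fun s => f s ^ 2) ≤ _ + _ * _ * stickyMean (fun s => |f s|) ^ 2
  set U := stickyMean (fun s => |f s|)
  set E := ∫ s in (0 : ℝ)..1, deriv f s ^ 2
  have hU : 0 ≤ U := by
    have : 0 ≤ ∫ s in (0 : ℝ)..1, |f s| := integral_nonneg zero_le_one fun s _ => abs_nonneg _
    unfold U stickyMean
    positivity
  have hE : 0 ≤ E := integral_nonneg zero_le_one fun s _ => sq_nonneg _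
  have hbound (t : ℝ) (ht : 0 < t) :
      stickyMean (fun s => f s ^ 2) ≤ (2 * U / h + t / 2 * E + h / (2 * t)) * U := by
    refine stickyMean_sq_le_mul hf.continuous fun x hx =>
      (abs_le_integral_abs_div_add_integral_deriv_sq hf hx hh₀ (by simpa) ht).trans ?_
    gcongr
    unfold U stickyMean
    linarith [abs_nonneg (f 0), abs_nonneg (f 1)]
  rcases hU.eq_or_lt with hU₀ | hU₀
  · have := hbound 1 one_pos
    rw [← hU₀] at this ⊢
    nlinarith [mul_nonneg hr.le hE]
  · calc stickyMean (fun s => f s ^ 2)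
        ≤ (2 * U / h + r / U / 2 * E + h / (2 * (r / U))) * U := hbound _ (by positivity)
      _ = r / 2 * E + (2 * h⁻¹ + h / r / 2) * U ^ 2 := by field_simp; ring
      _ ≤ r / 2 * E + 5 / 2 * h⁻¹ * U ^ 2 := by gcongr; linarith
end
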